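/- arXiv:1212.6710 — 2 statements merged into one kernel-verified Lean document; each statement's English description precedes it below -/
import Mathlib

section
/- Let S be an n×n matrix with real entries, regarded as a complex matrix, and for a real diagonal n×n matrix M define F(M) := det(exp(−iM/2)) · det(I − exp(iM)·S). Then the complex conjugate of F(M) equals F(−M) for every real diagonal M. Consequently, if A : ℝ^b → (real diagonal n×n matrices) is a linear map, E is a fixed real diagonal n×n matrix, and the function F̃(k, α) := F(A(α) + k·E) is real-valued, then F̃(k, α) = F̃(−k, −α) for all k ∈ ℝ and α ∈ ℝ^b. -/
open scoped ComplexConjugate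

/-- The secular-type function `F(M) = det(exp(-iM/2)) · det(I - exp(iM)·S)` built from a
real matrix `S` (regarded as complex) and a real matrix `M` (intended diagonal). -/
noncomputable def secularDet {n : ℕ} (S : Matrix (Fin n) (Fin n) ℝ)
    (M : Matrix (Fin n) (Fin n) ℝ) : ℂ :=
  (NormedSpace.exp ((-(Complex.I / 2)) • M.map (Complex.ofReal))).det *
    ((1 : Matrix (Fin n) (Fin n) ℂ) -
      NormedSpace.exp (Complex.I • M.map (Complex.ofReal)) *
        S.map (Complex.ofReal)).det

/-! Complex conjugation commutes with the matrix exponential and the determinant and fixes the real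
matrices `S` and `M`, so conjugating `F(M)` only replaces `i` by `-i`, which amounts to replacing `M`
by `-M`. If `F̃` is real, then `F̃(k, α) = conj F̃(k, α) = F(-(A α + k E)) = F̃(-k, -α)` by linearity
of `A`. -/

open NormedSpace

theorem Matrix.exp_map_star {m 𝔸 : Type*} [Fintype m] [DecidableEq m] [CommRing 𝔸]
    [TopologicalSpace 𝔸] [IsTopologicalRing 𝔸] [Algebra ℚ 𝔸] [T2Space 𝔸] [StarRing 𝔸]
    [ContinuousStar 𝔸] (A : Matrix m m 𝔸) :
    exp (A.map star) = (exp A).map star := by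
  rw [← conjTranspose_transpose, exp_transpose, exp_conjTranspose, conjTranspose_transpose]

theorem Matrix.map_conj_ofReal {m n : Type*} (M : Matrix m n ℝ) :
    (M.map Complex.ofReal).map (starRingEnd ℂ) = M.map Complex.ofReal := by
  ext; simp

theorem Matrix.map_conj_exp_smul_ofReal {m : Type*} [Fintype m] [DecidableEq m] (c : ℂ)
    (M : Matrix m m ℝ) :
    (exp (c • M.map Complex.ofReal)).map (starRingEnd ℂ) = exp (conj c • M.map Complex.ofReal) := by
  have h : (c • M.map Complex.ofReal).map (starRingEnd ℂ) = conj c • M.map Complex.ofReal := by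
    ext; simp
  exact (Matrix.exp_map_star _).symm.trans (congrArg exp h)

theorem conj_secularDet {n : ℕ} (S M : Matrix (Fin n) (Fin n) ℝ) :
    conj (secularDet S M) = secularDet S (-M) := by
  have hneg : (-M).map Complex.ofReal = -M.map Complex.ofReal := Matrix.map_neg _ Complex.ofReal_neg M
  have half : conj (-(Complex.I / 2)) • M.map Complex.ofReal =
      -(Complex.I / 2) • (-M).map Complex.ofReal := by
    rw [hneg, smul_neg, ← neg_smul, map_neg, map_div₀, Complex.conj_I, map_ofNat, neg_div]
  have full : conj Complex.I • M.map Complex.ofReal = Complex.I • (-M).map Complex.ofReal := by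
    rw [hneg, smul_neg, ← neg_smul, Complex.conj_I]
  rw [secularDet, secularDet, map_mul, RingHom.map_det, RingHom.map_det, RingHom.mapMatrix_apply,
    RingHom.mapMatrix_apply, Matrix.map_sub _ (map_sub _), Matrix.map_one _ (map_zero _) (map_one _),
    Matrix.map_mul, Matrix.map_conj_exp_smul_ofReal, Matrix.map_conj_exp_smul_ofReal,
    Matrix.map_conj_ofReal, half, full]

/-- For a real `n×n` matrix `S` and real diagonal `M`, the complex
conjugate of `F(M) := det(exp(-iM/2))·det(I - exp(iM)·S)` equals `F(-M)`. Consequently,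
for a linear family `A : ℝ^b → {real diagonal matrices}` and a fixed real diagonal `E`,
if `F̃(k, α) := F(A(α) + k·E)` is real-valued then `F̃(k, α) = F̃(-k, -α)`. -/
theorem secular_function_symmetry
    (n : ℕ) (S : Matrix (Fin n) (Fin n) ℝ) :
    (∀ M : Matrix (Fin n) (Fin n) ℝ, M.IsDiag →
        conj (secularDet S M) = secularDet S (-M)) ∧
    ∀ (b : ℕ) (A : (Fin b → ℝ) →ₗ[ℝ] Matrix (Fin n) (Fin n) ℝ),
      (∀ α, (A α).IsDiag) →
      ∀ E : Matrix (Fin n) (Fin n) ℝ, E.IsDiag →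
      (∀ (k : ℝ) (α : Fin b → ℝ), (secularDet S (A α + k • E)).im = 0) →
      ∀ (k : ℝ) (α : Fin b → ℝ),
        secularDet S (A α + k • E) = secularDet S (A (-α) + (-k) • E) := by
  refine ⟨fun M _ => conj_secularDet S M, fun b A _ E _ hreal k α => ?_⟩
  have hneg : -(A α + k • E) = A (-α) + (-k) • E := by rw [map_neg, neg_add, neg_smul]
  calc secularDet S (A α + k • E)
      = conj (secularDet S (A α + k • E)) := (Complex.conj_eq_iff_im.2 (hreal k α)).symm
    _ = secularDet S (A (-α) + (-k) • E) := by rw [conj_secularDet, hneg]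
end

section
/- Let G be a finite connected simple graph containing at least one cycle and let L be a discrete Schrödinger operator on G. Then the girth of G (the length of its shortest cycle) equals the least integer k ≥ 1 for which the function A ↦ trace(L(A)^k), defined on magnetic potentials A, is not constant. -/
/-- The magnetic Schrödinger operator `L(A)` associated to a real symmetric matrix `L`
and a magnetic potential `A`: `L(A)_{uv} = L_{uv} e^{i A(u,v)}` off the diagonal,
with unchanged diagonal. -/
noncomputable def magneticMatrix {V : Type*} [Fintype V] [DecidableEq V]
    (L : Matrix V V ℝ) (A : V → V → ℝ) : Matrix V V ℂ :=
  Matrix.of fun u v =>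
    if u = v then (L u v : ℂ) else (L u v : ℂ) * Complex.exp (Complex.I * (A u v : ℂ))

/-!
Expanding the power gives `tr L(A)^k = ∑_w (∏_w L) · exp(i ∮_w A)` over closed walks `w` with
`k` steps, and only walks that move along edges or pause contribute.  A closed lazy walk with
fewer than `girth G` steps carries no flux: cutting it at a repeated vertex gives two shorter
closed walks, and without repeated vertices it would be a cycle shorter than the girth.  So
for `k < girth G` the trace does not depend on `A`.  For `k = girth G`, put flux `π` on one
edge of a shortest cycle.  A walk with nonzero flux cannot pause (dropping the pause would
leave a closed walk below the girth), so it runs along `k` edges and `∏_w L` has sign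
`(-1)^k`.  The real part of the trace thus drops by `∑_w (∏_w L)(1 - cos ∮_w A)`, a sum of
terms of sign `(-1)^k`, and the shortest cycle contributes a nonzero one.
-/

namespace List

variable {V M : Type*}

def walkSum [AddMonoid M] (φ : V → V → M) (l : List V) : M :=
  (zipWith φ l l.tail).sum

section AddMonoid

variable [AddMonoid M] (φ : V → V → M)

theorem walkSum_singleton (a : V) : walkSum φ [a] = 0 := rfl

theorem walkSum_cons_cons (a b : V) (l : List V) :
    walkSum φ (a :: b :: l) = φ a b + walkSum φ (b :: l) := by
  simp [walkSum]

theorem walkSum_append_cons (l₁ : List V) (b : V) (l₂ : List V) :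
    walkSum φ (l₁ ++ b :: l₂) = walkSum φ (l₁ ++ [b]) + walkSum φ (b :: l₂) := by
  induction l₁ with
  | nil => simp [walkSum_singleton]
  | cons a l₁ ih =>
    cases l₁ with
    | nil => simp [walkSum_cons_cons, walkSum_singleton]
    | cons c l₁ => simp only [cons_append, walkSum_cons_cons] at ih ⊢; rw [ih, add_assoc]

theorem walkSum_zero (l : List V) : walkSum (0 : V → V → M) l = 0 := by
  induction l with
  | nil => rfl
  | cons a t ih =>
    cases t with
    | nil => rfl
    | cons b t => rw [walkSum_cons_cons, ih, Pi.zero_apply, Pi.zero_apply, add_zero]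

end AddMonoid

theorem walkSum_append_cons_append_cons [AddCommMonoid M] (φ : V → V → M)
    (p : List V) (y : V) (q r : List V) :
    walkSum φ (p ++ y :: q ++ y :: r) = walkSum φ (y :: q ++ [y]) + walkSum φ (p ++ y :: r) := by
  rw [walkSum_append_cons φ (p ++ y :: q), append_assoc, cons_append,
    walkSum_append_cons φ p y (q ++ [y]), walkSum_append_cons φ p y r]
  abel

theorem isChain_append_cons_append_cons {R : V → V → Prop} {p : List V} {y : V} {q r : List V} :
    IsChain R (p ++ y :: q ++ y :: r) ↔ IsChain R (y :: q ++ [y]) ∧ IsChain R (p ++ y :: r) := by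
  rw [isChain_split (l₁ := p ++ y :: q), append_assoc, cons_append,
    isChain_split (l₁ := p) (l₂ := q ++ [y]), isChain_split (l₁ := p) (l₂ := r)]
  tauto

theorem head?_eq_getLast?_of_append_cons_append_cons {p : List V} {y : V} {q r : List V}
    (h : (p ++ y :: q ++ y :: r).head? = (p ++ y :: q ++ y :: r).getLast?) :
    (p ++ y :: r).head? = (p ++ y :: r).getLast? := by
  simpa [getLast?_append, getLast?_cons] using h

theorem head?_eq_getLast?_cons_append_singleton (u : V) (l : List V) :
    (u :: l ++ [u]).head? = (u :: l ++ [u]).getLast? := by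
  simp [getLast?_cons]

theorem exists_eq_append_cons_append_cons_of_not_nodup {l : List V} (h : ¬ l.Nodup) :
    ∃ p y q r, l = p ++ y :: q ++ y :: r := by
  obtain ⟨y, hy⟩ : ∃ y, [y, y] <+ l := by simpa [nodup_iff_sublist] using h
  obtain ⟨r₁, r₂, rfl, h₁, h₂⟩ := cons_sublist_iff.mp hy
  obtain ⟨p, q, rfl⟩ := append_of_mem h₁
  obtain ⟨q', r, rfl⟩ := append_of_mem (singleton_sublist.mp h₂)
  exact ⟨p, y, q ++ q', r, by simp⟩

end List

namespace Matrix

variable {V R : Type*}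

def walkProd [Monoid R] (M : Matrix V V R) (l : List V) : R :=
  (List.zipWith (fun a b => M a b) l l.tail).prod

section Monoid

variable [Monoid R] (M : Matrix V V R)

theorem walkProd_nil : M.walkProd [] = 1 := rfl

theorem walkProd_singleton (a : V) : M.walkProd [a] = 1 := rfl

theorem walkProd_cons_cons (a b : V) (l : List V) :
    M.walkProd (a :: b :: l) = M a b * M.walkProd (b :: l) := by
  simp [walkProd]

end Monoid

theorem isChain_of_walkProd_ne_zero [MonoidWithZero R] {M : Matrix V V R} {l : List V}
    (h : M.walkProd l ≠ 0) : l.IsChain fun a b => M a b ≠ 0 := by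
  induction l with
  | nil => exact .nil
  | cons a t ih =>
    cases t with
    | nil => exact .singleton a
    | cons b t =>
      rw [walkProd_cons_cons] at h
      exact .cons_cons (left_ne_zero_of_mul h) (ih (right_ne_zero_of_mul h))

theorem neg_one_pow_mul_walkProd_pos [CommRing R] [PartialOrder R] [IsStrictOrderedRing R]
    {M : Matrix V V R} {l : List V} (h : l.IsChain fun a b => M a b < 0) :
    0 < (-1) ^ (l.length - 1) * M.walkProd l := by
  induction l with
  | nil => simp [walkProd_nil]
  | cons a t ih =>
    cases t with
    | nil => simp [walkProd_singleton]
    | cons b t =>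
      rw [List.isChain_cons_cons] at h
      have key : (-1) ^ ((a :: b :: t).length - 1) * M.walkProd (a :: b :: t)
          = -M a b * ((-1) ^ ((b :: t).length - 1) * M.walkProd (b :: t)) := by
        simp only [List.length_cons, walkProd_cons_cons, Nat.add_sub_cancel, pow_succ]
        ring
      rw [key]
      exact mul_pos (neg_pos.mpr h.1) (ih h.2)

variable [Fintype V] [DecidableEq V] [Semiring R]

theorem pow_succ_apply_eq_sum_walkProd (M : Matrix V V R) (n : ℕ) (u v : V) :
    (M ^ (n + 1)) u v = ∑ f : Fin n → V, M.walkProd (u :: List.ofFn f ++ [v]) := by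
  induction n generalizing u with
  | zero => simp [walkProd_cons_cons, walkProd_singleton]
  | succ n ih =>
    rw [pow_succ', mul_apply, ← (Fin.consEquiv fun _ => V).sum_comp, Fintype.sum_prod_type]
    simp [ih, Finset.mul_sum, Fin.consEquiv, List.ofFn_succ, walkProd_cons_cons]

theorem trace_pow_succ_eq_sum_walkProd (M : Matrix V V R) (n : ℕ) :
    (M ^ (n + 1)).trace = ∑ u, ∑ f : Fin n → V, M.walkProd (u :: List.ofFn f ++ [u]) := by
  simp [trace, pow_succ_apply_eq_sum_walkProd]

end Matrix

namespace SimpleGraph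

variable {V : Type*} {G : SimpleGraph V}

open List Relation

theorem Walk.walkSum_support {M : Type*} [AddMonoid M] (φ : V → V → M) {u v : V}
    (p : G.Walk u v) : p.support.walkSum φ = (p.darts.map fun d => φ d.fst d.snd).sum := by
  induction p with
  | nil => rfl
  | cons h p ih =>
    rw [support_cons, ← cons_tail_support, walkSum_cons_cons, cons_tail_support, ih]
    simp

theorem Walk.exists_cons_ofFn_append_eq_support {u : V} (p : G.Walk u u) {n : ℕ}
    (hn : p.length = n + 1) : ∃ f : Fin n → V, u :: ofFn f ++ [u] = p.support := by
  cases p with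
  | nil => simp at hn
  | cons h q =>
    have hq : q.support.dropLast.length = n := by simp at hn ⊢; omega
    have hf : ofFn (fun i : Fin n => q.support.dropLast[i]) = q.support.dropLast :=
      ext_getElem (by simp [hq]) (by simp)
    have hlast := dropLast_append_getLast q.support_ne_nil
    rw [getLast_support] at hlast
    exact ⟨_, by rw [hf, support_cons, List.cons_append, hlast]⟩

theorem egirth_lt_length_of_isChain {l : List V} (hl : l.IsChain G.Adj)
    (hclosed : l.head? = l.getLast?) (hnodup : l.tail.Nodup) (hlen : 4 ≤ l.length) :
    G.egirth < l.length := by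
  have hne : l ≠ [] := by rintro rfl; simp at hlen
  have hlast : l.getLast hne = l.head hne := by
    simpa [head?_eq_some_head hne, getLast?_eq_some_getLast hne] using hclosed.symm
  set w := (Walk.ofSupport l hne hl).copy rfl hlast
  have hw : w.length = l.length - 1 := by simp [w]
  have hcyc : w.IsCycle := by
    rw [Walk.isCycle_iff_isPath_tail_and_le_length]
    refine ⟨Walk.IsPath.mk' ?_, by omega⟩
    rw [Walk.support_tail_of_not_nil _ (Walk.not_nil_iff_lt_length.mpr (by omega))]
    simpa [w] using hnodup
  calc G.egirth ≤ w.length := egirth_le_length hcyc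
    _ < l.length := by rw [hw]; norm_cast; omega

theorem egirth_lt_length_of_isChain_reflGen {l : List V} (hl : l.IsChain (ReflGen G.Adj))
    (hclosed : l.head? = l.getLast?) (hlen : 4 ≤ l.length)
    (hsimple : ∀ p y q r, l = p ++ y :: q ++ y :: r → p = [] ∧ r = []) :
    G.egirth < l.length := by
  have hnodup : l.tail.Nodup := by
    by_contra h
    obtain ⟨p, y, q, r, h⟩ := exists_eq_append_cons_append_cons_of_not_nodup h
    obtain ⟨x, t, rfl⟩ := exists_cons_of_length_pos (by omega : 0 < l.length)
    simpa using hsimple (x :: p) y q r (by simp [← h])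
  have hadj : l.IsChain G.Adj := by
    refine isChain_iff_forall_rel_of_append_cons_cons.mpr fun x z l₁ l₂ h => ?_
    rcases (reflGen_iff _ _ _).mp (isChain_iff_forall_rel_of_append_cons_cons.mp hl h)
      with hzx | hxz
    · obtain ⟨rfl, rfl⟩ := hsimple l₁ x [] l₂ (by simp [h, hzx])
      simp [h] at hlen
    · exact hxz
  exact egirth_lt_length_of_isChain hadj hclosed hnodup hlen

theorem isChain_reflGen_adj_of_walkProd_ne_zero {R : Type*} [MonoidWithZero R]
    {L : Matrix V V R} (hzero : ∀ u v, u ≠ v → ¬ G.Adj u v → L u v = 0) {l : List V}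
    (h : L.walkProd l ≠ 0) : l.IsChain (ReflGen G.Adj) :=
  (Matrix.isChain_of_walkProd_ne_zero h).imp fun a b hab => by
    by_contra hr
    rw [reflGen_iff, not_or] at hr
    exact hab (hzero a b (Ne.symm hr.1) hr.2)

variable {M : Type*} [AddCommGroup M] {φ : V → V → M}

theorem walkSum_eq_zero_of_length_le_egirth
    (hφ : ∀ u v, φ u v = -φ v u) (hφ₀ : ∀ u, φ u u = 0) (l : List V)
    (hl : l.IsChain (ReflGen G.Adj)) (hclosed : l.head? = l.getLast?)
    (hlen : (l.length : ℕ∞) ≤ G.egirth) : l.walkSum φ = 0 := by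
  induction hn : l.length using Nat.strong_induction_on generalizing l with
  | _ n ih =>
  have shorter : ∀ l' : List V, l'.IsChain (ReflGen G.Adj) → l'.head? = l'.getLast? →
      l'.length < l.length → l'.walkSum φ = 0 := fun l' h₁ h₂ h₃ =>
    ih _ (hn ▸ h₃) l' h₁ h₂ (le_trans (by exact_mod_cast h₃.le) hlen) rfl
  by_cases hsplit : ∃ p y q r, l = p ++ y :: q ++ y :: r ∧ (p ≠ [] ∨ r ≠ [])
  · obtain ⟨p, y, q, r, rfl, hpr⟩ := hsplit
    rw [isChain_append_cons_append_cons] at hl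
    have hpr' : 0 < p.length + r.length := by
      rcases hpr with h | h <;> have := length_pos_of_ne_nil h <;> omega
    rw [walkSum_append_cons_append_cons,
      shorter _ hl.1 (by simp [getLast?_cons, getLast?_append]) (by simp; omega),
      shorter _ hl.2 (head?_eq_getLast?_of_append_cons_append_cons hclosed) (by simp), add_zero]
  push Not at hsplit
  match l, hl, hclosed with
  | [], _, _ | [_], _, _ => rfl
  | [a, b], _, hclosed =>
    obtain rfl : a = b := by simpa using hclosed
    simp [walkSum_cons_cons, walkSum_singleton, hφ₀]
  | [a, b, c], _, hclosed =>
    obtain rfl : a = c := by simpa using hclosed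
    rw [walkSum_cons_cons, walkSum_cons_cons, walkSum_singleton, add_zero, hφ, neg_add_cancel]
  | a :: b :: c :: d :: t, hl, hclosed =>
    exact absurd hlen
      (not_le.mpr (egirth_lt_length_of_isChain_reflGen hl hclosed (by simp) hsplit))

theorem isChain_adj_of_walkSum_ne_zero
    (hφ : ∀ u v, φ u v = -φ v u) (hφ₀ : ∀ u, φ u u = 0) {l : List V}
    (hl : l.IsChain (ReflGen G.Adj)) (hclosed : l.head? = l.getLast?)
    (hlen : (l.length : ℕ∞) ≤ G.egirth + 1) (hS : l.walkSum φ ≠ 0) : l.IsChain G.Adj := by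
  refine isChain_iff_forall_rel_of_append_cons_cons.mpr fun x z l₁ l₂ h => ?_
  rcases (reflGen_iff _ _ _).mp (isChain_iff_forall_rel_of_append_cons_cons.mp hl h)
    with rfl | hxz
  · rw [show l = l₁ ++ z :: [] ++ z :: l₂ by simp [h]] at hl hclosed hlen hS
    rw [isChain_append_cons_append_cons] at hl
    refine absurd ?_ hS
    rw [walkSum_append_cons_append_cons, walkSum_eq_zero_of_length_le_egirth hφ hφ₀ _ hl.2
      (head?_eq_getLast?_of_append_cons_append_cons hclosed)]
    · simp [walkSum_cons_cons, walkSum_singleton, hφ₀]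
    · rw [← ENat.add_le_add_iff_right ENat.one_ne_top]
      simpa [add_assoc, one_add_one_eq_two] using hlen
  · exact hxz

end SimpleGraph

open SimpleGraph List Relation Finset

section Magnetic

variable {V : Type*} [Fintype V] [DecidableEq V] {G : SimpleGraph V} {L : Matrix V V ℝ}
  {A : V → V → ℝ}

theorem magneticMatrix_apply (hA : ∀ u v, A u v = -A v u) (u v : V) :
    magneticMatrix L A u v = L u v * Complex.exp (A u v * Complex.I) := by
  rw [magneticMatrix, Matrix.of_apply]
  split_ifs with h
  · subst h
    simp [show A u u = 0 by linarith [hA u u]]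
  · rw [mul_comm Complex.I]

theorem walkProd_magneticMatrix (hA : ∀ u v, A u v = -A v u) (l : List V) :
    (magneticMatrix L A).walkProd l = L.walkProd l * Complex.exp (l.walkSum A * Complex.I) := by
  induction l with
  | nil => simp [Matrix.walkProd_nil, walkSum]
  | cons a t ih =>
    cases t with
    | nil => simp [Matrix.walkProd_singleton, walkSum_singleton]
    | cons b t =>
      rw [Matrix.walkProd_cons_cons, Matrix.walkProd_cons_cons, walkSum_cons_cons, ih,
        magneticMatrix_apply hA]
      push_cast
      rw [add_mul, Complex.exp_add]
      ring

theorem re_trace_magneticMatrix_pow_succ (hA : ∀ u v, A u v = -A v u) (n : ℕ) :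
    (magneticMatrix L A ^ (n + 1)).trace.re = ∑ u, ∑ f : Fin n → V,
      L.walkProd (u :: ofFn f ++ [u]) * Real.cos ((u :: ofFn f ++ [u]).walkSum A) := by
  simp [Matrix.trace_pow_succ_eq_sum_walkProd, walkProd_magneticMatrix hA, Complex.re_sum,
    Complex.exp_ofReal_mul_I_re]

theorem walkProd_magneticMatrix_eq_of_length_le_egirth
    (hzero : ∀ u v, u ≠ v → ¬ G.Adj u v → L u v = 0) (hA : ∀ u v, A u v = -A v u)
    {l : List V} (hclosed : l.head? = l.getLast?) (hlen : (l.length : ℕ∞) ≤ G.egirth) :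
    (magneticMatrix L A).walkProd l = L.walkProd l := by
  rw [walkProd_magneticMatrix hA]
  by_cases h : L.walkProd l = 0
  · simp [h]
  rw [walkSum_eq_zero_of_length_le_egirth hA
    (fun u => by linarith [hA u u]) l (isChain_reflGen_adj_of_walkProd_ne_zero hzero h)
    hclosed hlen]
  simp

theorem trace_magneticMatrix_pow_eq_of_lt_girth
    (hzero : ∀ u v, u ≠ v → ¬ G.Adj u v → L u v = 0) {B : V → V → ℝ}
    (hA : ∀ u v, A u v = -A v u) (hB : ∀ u v, B u v = -B v u) {n : ℕ}
    (hn : n + 1 < G.girth) :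
    (magneticMatrix L A ^ (n + 1)).trace = (magneticMatrix L B ^ (n + 1)).trace := by
  simp only [Matrix.trace_pow_succ_eq_sum_walkProd]
  refine sum_congr rfl fun u _ => sum_congr rfl fun f _ => ?_
  have hlen : ((u :: ofFn f ++ [u]).length : ℕ∞) ≤ G.egirth :=
    (Nat.cast_le.mpr (show _ ≤ G.girth by simp; omega)).trans G.egirth.natCast_toNat_le_self
  have hclosed := head?_eq_getLast?_cons_append_singleton u (ofFn f)
  rw [walkProd_magneticMatrix_eq_of_length_le_egirth hzero hA hclosed hlen,
    walkProd_magneticMatrix_eq_of_length_le_egirth hzero hB hclosed hlen]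

end Magnetic

section DartPotential

variable {V : Type*} [DecidableEq V]

noncomputable def dartPotential (a b : V) : V → V → ℝ := fun u v =>
  Real.pi * ((if u = a ∧ v = b then 1 else 0) - (if v = a ∧ u = b then 1 else 0))

theorem dartPotential_antisymm (a b u v : V) :
    dartPotential a b u v = -dartPotential a b v u := by
  simp only [dartPotential]
  ring

theorem walkSum_support_dartPotential {G : SimpleGraph V} {a b : V} (hab : G.Adj a b)
    (p : G.Walk b a) (hp : (Walk.cons hab p).IsTrail) :
    (Walk.cons hab p).support.walkSum (dartPotential a b) = Real.pi := by
  have hfresh : s(a, b) ∉ p.edges := ((Walk.isTrail_cons hab p).mp hp).2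
  have hrest : (p.darts.map fun d => dartPotential a b d.fst d.snd).sum = 0 := by
    refine List.sum_eq_zero fun x hx => ?_
    obtain ⟨d, hd, rfl⟩ := List.mem_map.mp hx
    have hd' : s(d.fst, d.snd) ∈ p.edges := List.mem_map_of_mem (f := Dart.edge) hd
    have h₁ : ¬ (d.fst = a ∧ d.snd = b) := by rintro ⟨h₁, h₂⟩; simp_all
    have h₂ : ¬ (d.snd = a ∧ d.fst = b) := by rintro ⟨h₁, h₂⟩; simp_all [Sym2.eq_swap]
    simp [dartPotential, h₁, h₂]
  rw [Walk.walkSum_support, Walk.darts_cons, List.map_cons, List.sum_cons, hrest]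
  simp [dartPotential, hab.ne']

end DartPotential

section Girth

variable {V : Type*} {G : SimpleGraph V} {L : Matrix V V ℝ}

theorem neg_one_pow_mul_walkProd_mul_one_sub_cos_nonneg
    (hneg : ∀ u v, G.Adj u v → L u v < 0) (hzero : ∀ u v, u ≠ v → ¬ G.Adj u v → L u v = 0)
    {A : V → V → ℝ} (hA : ∀ u v, A u v = -A v u) {l : List V}
    (hclosed : l.head? = l.getLast?) (hlen : (l.length : ℕ∞) ≤ G.egirth + 1) :
    0 ≤ (-1) ^ (l.length - 1) * L.walkProd l * (1 - Real.cos (l.walkSum A)) := by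
  by_cases hS : l.walkSum A = 0
  · simp [hS]
  by_cases hP : L.walkProd l = 0
  · simp [hP]
  have hadj := isChain_adj_of_walkSum_ne_zero hA (fun u => by linarith [hA u u])
    (isChain_reflGen_adj_of_walkProd_ne_zero hzero hP) hclosed hlen hS
  exact mul_nonneg (Matrix.neg_one_pow_mul_walkProd_pos (hadj.imp hneg)).le
    (sub_nonneg.mpr (Real.cos_le_one _))

variable [Fintype V] [DecidableEq V]

theorem exists_trace_magneticMatrix_pow_girth_ne (hcyc : ¬ G.IsAcyclic)
    (hneg : ∀ u v, G.Adj u v → L u v < 0) (hzero : ∀ u v, u ≠ v → ¬ G.Adj u v → L u v = 0) :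
    ∃ A : V → V → ℝ, (∀ u v, A u v = -A v u) ∧
      (magneticMatrix L A ^ G.girth).trace ≠ (magneticMatrix L 0 ^ G.girth).trace := by
  obtain ⟨a, w, hw, hgirth⟩ := exists_girth_eq_length.mpr hcyc
  cases w with
  | nil => exact absurd hw (by simp)
  | @cons _ b _ hab p =>
  obtain ⟨f₀, hsupp⟩ := (Walk.cons hab p).exists_cons_ofFn_append_eq_support rfl
  rw [Walk.length_cons] at hgirth
  refine ⟨dartPotential a b, dartPotential_antisymm a b, fun heq => ?_⟩
  have hre := congrArg Complex.re heq
  rw [hgirth, re_trace_magneticMatrix_pow_succ (dartPotential_antisymm a b),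
    re_trace_magneticMatrix_pow_succ (fun _ _ => by simp)] at hre
  simp only [walkSum_zero, Real.cos_zero, mul_one] at hre
  have hterm (u : V) (f : Fin p.length → V) :
      0 ≤ (-1) ^ (p.length + 1) * L.walkProd (u :: ofFn f ++ [u]) *
        (1 - Real.cos ((u :: ofFn f ++ [u]).walkSum (dartPotential a b))) := by
    have hlen : ((u :: ofFn f ++ [u]).length : ℕ∞) ≤ G.egirth + 1 := by
      have : ((p.length + 1 : ℕ) : ℕ∞) ≤ G.egirth := hgirth ▸ G.egirth.natCast_toNat_le_self
      simpa using add_le_add_right this 1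
    simpa using neg_one_pow_mul_walkProd_mul_one_sub_cos_nonneg hneg hzero
      (dartPotential_antisymm a b) (head?_eq_getLast?_cons_append_singleton u (ofFn f)) hlen
  have hcycle : 0 < (-1) ^ (p.length + 1) * L.walkProd (a :: ofFn f₀ ++ [a]) *
      (1 - Real.cos ((a :: ofFn f₀ ++ [a]).walkSum (dartPotential a b))) := by
    have hsign :=
      Matrix.neg_one_pow_mul_walkProd_pos ((Walk.cons hab p).isChain_adj_support.imp hneg)
    rw [hsupp, walkSum_support_dartPotential hab p hw.isTrail, Real.cos_pi]
    simp only [Walk.length_support, Walk.length_cons, Nat.add_sub_cancel] at hsign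
    linarith
  have hpos := sum_pos' (fun u _ => sum_nonneg fun f _ => hterm u f)
    ⟨a, mem_univ a, sum_pos' (fun f _ => hterm a f) ⟨f₀, mem_univ f₀, hcycle⟩⟩
  simp only [mul_sub, mul_one, mul_assoc, sum_sub_distrib, ← mul_sum] at hpos
  rw [hre, sub_self] at hpos
  exact lt_irrefl 0 hpos

end Girth

theorem girth_eq_least_k_with_nonconstant_trace_general
    {V : Type*} [Fintype V] [DecidableEq V]
    (G : SimpleGraph V) (hcyc : ¬ G.IsAcyclic)
    (L : Matrix V V ℝ)
    (hneg : ∀ u v, G.Adj u v → L u v < 0)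
    (hzero : ∀ u v, u ≠ v → ¬ G.Adj u v → L u v = 0) :
    IsLeast {k : ℕ | 1 ≤ k ∧
        ¬ ∀ A B : V → V → ℝ, (∀ u v, A u v = - A v u) → (∀ u v, B u v = - B v u) →
            ((magneticMatrix L A) ^ k).trace = ((magneticMatrix L B) ^ k).trace}
      G.girth := by
  refine ⟨⟨(three_le_girth hcyc).trans' (by norm_num), fun hconst => ?_⟩, ?_⟩
  · obtain ⟨A, hA, hne⟩ := exists_trace_magneticMatrix_pow_girth_ne hcyc hneg hzero
    exact hne (hconst A 0 hA fun _ _ => by simp)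
  · rintro k ⟨hk, hnonconst⟩
    by_contra hlt
    obtain ⟨n, rfl⟩ := Nat.exists_eq_add_of_le' hk
    exact hnonconst fun A B hA hB =>
      trace_magneticMatrix_pow_eq_of_lt_girth hzero hA hB (not_le.mp hlt)

/-- For a finite connected simple graph containing at least one cycle
and a discrete Schrödinger operator `L` on it, the girth of `G` is the least `k ≥ 1`
for which the function `A ↦ trace(L(A)^k)` on magnetic potentials is not constant. -/
theorem girth_eq_least_k_with_nonconstant_trace
    {V : Type*} [Fintype V] [DecidableEq V]
    (G : SimpleGraph V) (hconn : G.Connected) (hcyc : ¬ G.IsAcyclic)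
    (L : Matrix V V ℝ) (hsym : L.IsSymm)
    (hneg : ∀ u v, G.Adj u v → L u v < 0)
    (hzero : ∀ u v, u ≠ v → ¬ G.Adj u v → L u v = 0) :
    IsLeast {k : ℕ | 1 ≤ k ∧
        ¬ ∀ A B : V → V → ℝ, (∀ u v, A u v = - A v u) → (∀ u v, B u v = - B v u) →
            ((magneticMatrix L A) ^ k).trace = ((magneticMatrix L B) ^ k).trace}
      G.girth :=
  girth_eq_least_k_with_nonconstant_trace_general G hcyc L hneg hzero
end
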